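/- The second derivative of R(t) = f(t)²/2 satisfies R''(t) ≤ √(δ/(8π)) · e^{-2(δ-1/2)/t} · t^{-3/2} for all t > 0; in particular R'' is bounded on (0,∞) by a constant depending only on δ. -/

import Mathlib

/-!
Write `a = 2 / τ`, `Q = stdTail` and `m = stdExcess`, so that `m(a) = φ(a) - a Q(a)`.
Then `∫_a^∞ (x - a)² φ = Q(a) - a m(a)`, and the first-order condition for the minimiser reads
`t = 4 (δ - 1/2 + ψ(a)) / a²` with `ψ = Q + a m`. The right-hand side is strictly decreasing in
`a`, so `a(t) = 2 / τ(t)` is its inverse function, with `a' = -a / (8 Q(a) + 2 t)`. By the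
envelope theorem `f' = a / 4`, whence `R'' = a φ(a) / (2 (8 Q(a) + 2 t)) ≤ a φ(a) / (4 t)`.
Finally `0 < ψ ≤ 1/2` on `[0, ∞)` gives `4 (δ - 1/2) ≤ t a² ≤ 4 δ`, which bounds `a` by
`2 √(δ / t)` and `φ(a)` by `e^{-2 (δ - 1/2) / t} / √(2π)`; the uniform bound follows from
`y^{3/2} ≤ e^y`.
-/

open Real Set MeasureTheory

/-- standard normal density -/
noncomputable def stdPDF (x : ℝ) : ℝ := Real.exp (-x ^ 2 / 2) / Real.sqrt (2 * Real.pi)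

/-- The objective F(τ; t, δ). -/
noncomputable def Fobj (δ t τ : ℝ) : ℝ :=
  τ / 2 * (δ - 1 / 2) + t / (2 * τ)
    + τ / 2 * ∫ x in Set.Ioi (2 / τ), (x - 2 / τ) ^ 2 * stdPDF x

open Filter Topology

noncomputable def stdTail (a : ℝ) : ℝ := ∫ x in Ioi a, stdPDF x

noncomputable def stdExcess (a : ℝ) : ℝ := ∫ x in Ioi a, (x - a) * stdPDF x

lemma stdPDF_pos (x : ℝ) : 0 < stdPDF x := by
  unfold stdPDF
  positivity

lemma continuous_stdPDF : Continuous stdPDF := by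
  unfold stdPDF
  fun_prop

lemma stdPDF_eq_exp_neg_mul_sq (x : ℝ) :
    stdPDF x = exp (-(1 / 2) * x ^ 2) / √(2 * π) := by
  rw [stdPDF]
  ring_nf

lemma integrable_pow_mul_stdPDF (n : ℕ) : Integrable fun x => x ^ n * stdPDF x := by
  have h := (integrable_rpow_mul_exp_neg_mul_sq (by norm_num : (0 : ℝ) < 1 / 2)
    (neg_one_lt_zero.trans_le n.cast_nonneg)).div_const √(2 * π)
  simpa only [rpow_natCast, stdPDF_eq_exp_neg_mul_sq, mul_div_assoc] using h

lemma integrable_stdPDF : Integrable stdPDF := by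
  simpa using integrable_pow_mul_stdPDF 0

lemma integrable_mul_stdPDF : Integrable fun x => x * stdPDF x := by
  simpa using integrable_pow_mul_stdPDF 1

lemma tendsto_pow_mul_stdPDF_atTop (n : ℕ) :
    Tendsto (fun x => x ^ n * stdPDF x) atTop (𝓝 0) := by
  have hexp : Tendsto (fun x : ℝ => exp (-(1 / 2) * x)) atTop (𝓝 0) :=
    tendsto_exp_atBot.comp (tendsto_id.const_mul_atTop_of_neg (by norm_num))
  have h := ((rpow_mul_exp_neg_mul_sq_isLittleO_exp_neg (by norm_num : (0 : ℝ) < 1 / 2) n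
    ).isBigO.trans_tendsto hexp).div_const √(2 * π)
  simpa only [rpow_natCast, stdPDF_eq_exp_neg_mul_sq, mul_div_assoc, zero_div] using h

lemma hasDerivAt_stdPDF (x : ℝ) : HasDerivAt stdPDF (-x * stdPDF x) x := by
  have hexponent : HasDerivAt (fun y : ℝ => -y ^ 2 / 2) (-x) x :=
    ((hasDerivAt_pow 2 x).neg.div_const 2).congr_deriv (by ring)
  exact (hexponent.exp.div_const √(2 * π)).congr_deriv (by rw [stdPDF]; ring)

lemma integral_Ioi_mul_stdPDF (a : ℝ) : ∫ x in Ioi a, x * stdPDF x = stdPDF a := by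
  have h := integral_Ioi_of_hasDerivAt_of_tendsto (a := a) (f := fun x => -stdPDF x)
    continuous_stdPDF.neg.continuousWithinAt
    (fun x _ => (hasDerivAt_stdPDF x).neg.congr_deriv (by ring))
    integrable_mul_stdPDF.integrableOn
    (by simpa using (tendsto_pow_mul_stdPDF_atTop 0).neg)
  simpa using h

lemma integral_Ioi_sq_mul_stdPDF (a : ℝ) :
    ∫ x in Ioi a, x ^ 2 * stdPDF x = a * stdPDF a + stdTail a := by
  have h := integral_Ioi_of_hasDerivAt_of_tendsto (a := a) (f := fun x => -(x * stdPDF x))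
    (f' := fun x => x ^ 2 * stdPDF x - stdPDF x)
    (continuous_id.mul continuous_stdPDF).neg.continuousWithinAt
    (fun x _ => ((hasDerivAt_id x).mul (hasDerivAt_stdPDF x)).neg.congr_deriv
      (by simp only [id]; ring))
    ((integrable_pow_mul_stdPDF 2).sub integrable_stdPDF).integrableOn
    (by simpa using (tendsto_pow_mul_stdPDF_atTop 1).neg)
  rw [integral_sub (integrable_pow_mul_stdPDF 2).integrableOn integrable_stdPDF.integrableOn] at h
  rw [stdTail]
  linarith

lemma stdExcess_eq (a : ℝ) : stdExcess a = stdPDF a - a * stdTail a := by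
  simp_rw [stdExcess, sub_mul]
  rw [integral_sub integrable_mul_stdPDF.integrableOn
    (integrable_stdPDF.const_mul a).integrableOn, integral_const_mul, integral_Ioi_mul_stdPDF,
    stdTail]

lemma integral_Ioi_sub_sq_mul_stdPDF (a : ℝ) :
    ∫ x in Ioi a, (x - a) ^ 2 * stdPDF x = stdTail a - a * stdExcess a := by
  have hexpand : ∀ x, (x - a) ^ 2 * stdPDF x
      = (x ^ 2 * stdPDF x - 2 * a * (x * stdPDF x)) + a ^ 2 * stdPDF x := fun x => by ring
  have hquad : IntegrableOn (fun x => x ^ 2 * stdPDF x - 2 * a * (x * stdPDF x)) (Ioi a) :=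
    ((integrable_pow_mul_stdPDF 2).sub (integrable_mul_stdPDF.const_mul _)).integrableOn
  have hconst : IntegrableOn (fun x => a ^ 2 * stdPDF x) (Ioi a) :=
    (integrable_stdPDF.const_mul _).integrableOn
  simp_rw [hexpand]
  rw [integral_add hquad hconst, integral_sub (integrable_pow_mul_stdPDF 2).integrableOn
      (integrable_mul_stdPDF.const_mul _).integrableOn,
    integral_const_mul, integral_const_mul, integral_Ioi_sq_mul_stdPDF, integral_Ioi_mul_stdPDF,
    stdExcess_eq, stdTail]
  ring

lemma stdTail_pos (a : ℝ) : 0 < stdTail a := by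
  refine (setIntegral_pos_iff_support_of_nonneg_ae
    (Eventually.of_forall fun x => (stdPDF_pos x).le) integrable_stdPDF.integrableOn).2 ?_
  rw [Function.support_eq_univ fun x => (stdPDF_pos x).ne', univ_inter]
  simp

lemma stdExcess_nonneg (a : ℝ) : 0 ≤ stdExcess a :=
  setIntegral_nonneg measurableSet_Ioi fun x hx =>
    mul_nonneg (sub_nonneg.2 (le_of_lt hx)) (stdPDF_pos x).le

lemma stdTail_zero : stdTail 0 = 1 / 2 := by
  have h : stdTail 0 = (∫ x in Ioi (0 : ℝ), exp (-(1 / 2) * x ^ 2)) / √(2 * π) := by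
    simp_rw [stdTail, stdPDF_eq_exp_neg_mul_sq, integral_div]
  rw [h, integral_gaussian_Ioi, show π / (1 / 2) = 2 * π by ring]
  field_simp

lemma hasDerivAt_stdTail (a : ℝ) : HasDerivAt stdTail (-stdPDF a) a := by
  have hFTC : HasDerivAt (fun x => ∫ y in (0 : ℝ)..x, stdPDF y) (stdPDF a) a :=
    intervalIntegral.integral_hasDerivAt_right (continuous_stdPDF.intervalIntegrable 0 a)
      (continuous_stdPDF.stronglyMeasurableAtFilter _ _) continuous_stdPDF.continuousAt
  refine (hFTC.const_sub (stdTail 0)).congr_of_eventuallyEq (Eventually.of_forall fun x => ?_)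
  have hsplit := intervalIntegral.integral_interval_add_Ioi (a := 0) (b := x)
    integrable_stdPDF.integrableOn integrable_stdPDF.integrableOn
  simp only [stdTail]
  linarith

lemma hasDerivAt_stdExcess (a : ℝ) : HasDerivAt stdExcess (-stdTail a) a := by
  rw [show stdExcess = fun x => stdPDF x - x * stdTail x from funext stdExcess_eq]
  exact ((hasDerivAt_stdPDF a).sub ((hasDerivAt_id a).mul (hasDerivAt_stdTail a))).congr_deriv
    (by simp only [id]; ring)

noncomputable def psi (a : ℝ) : ℝ := stdTail a + a * stdExcess a

lemma hasDerivAt_psi (a : ℝ) : HasDerivAt psi (-(2 * a * stdTail a)) a :=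
  ((hasDerivAt_stdTail a).add ((hasDerivAt_id a).mul (hasDerivAt_stdExcess a))).congr_deriv
    (by simp only [id, stdExcess_eq]; ring)

lemma psi_pos {a : ℝ} (ha : 0 ≤ a) : 0 < psi a :=
  add_pos_of_pos_of_nonneg (stdTail_pos a) (mul_nonneg ha (stdExcess_nonneg a))

lemma psi_le_half {a : ℝ} (ha : 0 ≤ a) : psi a ≤ 1 / 2 := by
  have hanti : AntitoneOn psi (Ici 0) := by
    refine antitoneOn_of_deriv_nonpos (convex_Ici 0)
      (fun x _ => (hasDerivAt_psi x).continuousAt.continuousWithinAt)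
      (fun x _ => (hasDerivAt_psi x).differentiableAt.differentiableWithinAt) fun x hx => ?_
    rw [interior_Ici] at hx
    rw [(hasDerivAt_psi x).deriv, neg_nonpos]
    exact mul_nonneg (mul_nonneg zero_le_two (le_of_lt hx)) (stdTail_pos x).le
  simpa [psi, stdTail_zero] using hanti self_mem_Ici ha ha

/-- The first-order condition for `Fobj δ t` at `τ = 2 / a` reads `focTime δ a = t`. -/
noncomputable def focTime (δ a : ℝ) : ℝ := 4 * (δ - 1 / 2 + psi a) / a ^ 2

lemma focTime_pos {δ a : ℝ} (hδ : 1 / 2 < δ) (ha : 0 < a) : 0 < focTime δ a := by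
  have hψ := psi_pos ha.le
  unfold focTime
  exact div_pos (by linarith) (by positivity)

lemma hasDerivAt_focTime (δ : ℝ) {a : ℝ} (ha : a ≠ 0) :
    HasDerivAt (focTime δ) (-(8 * stdTail a + 2 * focTime δ a) / a) a := by
  have h := (((hasDerivAt_psi a).const_add (δ - 1 / 2)).const_mul 4).div (hasDerivAt_pow 2 a)
    (pow_ne_zero 2 ha)
  refine h.congr_deriv ?_
  simp only [focTime]
  field_simp
  ring

lemma focTime_strictAntiOn {δ : ℝ} (hδ : 1 / 2 < δ) : StrictAntiOn (focTime δ) (Ioi 0) := by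
  refine strictAntiOn_of_deriv_neg (convex_Ioi 0)
    (fun a ha => (hasDerivAt_focTime δ (ne_of_gt ha)).continuousAt.continuousWithinAt)
    fun a ha => ?_
  rw [interior_Ioi] at ha
  rw [(hasDerivAt_focTime δ (ne_of_gt ha)).deriv, neg_div, neg_neg_iff_pos]
  have hQ := stdTail_pos a
  have hT := focTime_pos hδ ha
  exact div_pos (by linarith) ha

lemma Fobj_two_div (δ t a : ℝ) :
    Fobj δ t (2 / a) = (δ - 1 / 2 + stdTail a - a * stdExcess a) / a + t * a / 4 := by
  rw [Fobj, div_div_cancel₀ two_ne_zero, integral_Ioi_sub_sq_mul_stdPDF, mul_div_assoc',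
    div_div_eq_mul_div]
  ring

lemma hasDerivAt_Fobj_two_div (δ t : ℝ) {a : ℝ} (ha : a ≠ 0) :
    HasDerivAt (fun b => Fobj δ t (2 / b)) ((t - focTime δ a) / 4) a := by
  simp_rw [Fobj_two_div]
  have hnum : HasDerivAt (fun b => δ - 1 / 2 + stdTail b - b * stdExcess b)
      (-(2 * stdExcess a)) a :=
    (((hasDerivAt_stdTail a).const_add _).sub ((hasDerivAt_id a).mul (hasDerivAt_stdExcess a))
      ).congr_deriv (by simp only [id, stdExcess_eq]; ring)
  refine ((hnum.div (hasDerivAt_id a) ha).add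
    (((hasDerivAt_id a).const_mul t).div_const 4)).congr_deriv ?_
  simp only [id, focTime, psi, stdExcess_eq]
  field_simp
  ring

lemma focTime_two_div_of_isMinOn {δ t τ : ℝ} (hτ : 0 < τ)
    (hmin : IsMinOn (Fobj δ t) (Ioi 0) τ) :
    focTime δ (2 / τ) = t := by
  have ha : 2 / τ ≠ 0 := by positivity
  have hmin' : IsLocalMin (Fobj δ t) (2 / (2 / τ)) := by
    rw [div_div_cancel₀ two_ne_zero]
    exact hmin.isLocalMin (Ioi_mem_nhds hτ)
  have hloc : IsLocalMin (fun b => Fobj δ t (2 / b)) (2 / τ) :=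
    hmin'.comp_continuous (continuousAt_const.div continuousAt_id ha)
  have hcrit := hloc.hasDerivAt_eq_zero (hasDerivAt_Fobj_two_div δ t ha)
  linarith

lemma Fobj_two_div_of_focTime {δ t a : ℝ} (ha : a ≠ 0) (h : focTime δ a = t) :
    Fobj δ t (2 / a) = t * a / 2 - 2 * stdExcess a := by
  rw [← h, Fobj_two_div, focTime, psi]
  field_simp
  ring

lemma hasDerivAt_of_strictAntiOn_of_rightInverse {T A : ℝ → ℝ} {U V : Set ℝ} {t T' : ℝ}
    (hU : IsOpen U) (hV : IsOpen V) (hT : StrictAntiOn T V) (hTV : MapsTo T V U)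
    (hAU : MapsTo A U V) (hTA : ∀ s ∈ U, T (A s) = s) (ht : t ∈ U)
    (hT' : HasDerivAt T T' (A t)) (hT'0 : T' ≠ 0) :
    HasDerivAt A T'⁻¹ t := by
  have hanti : AntitoneOn A U := fun s hs s' hs' hss' => by
    by_contra! hlt
    have hlt' := hT (hAU hs) (hAU hs') hlt
    rw [hTA s hs, hTA s' hs'] at hlt'
    linarith
  have himage : V ⊆ A '' U := fun a ha =>
    ⟨T a, hTV ha, hT.injOn (hAU (hTV ha)) ha (hTA _ (hTV ha))⟩
  have hcont : ContinuousAt A t :=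
    continuousAt_of_monotoneOn_of_image_mem_nhds (β := ℝᵒᵈ) hanti.dual_right (hU.mem_nhds ht)
      (mem_of_superset (hV.mem_nhds (hAU ht)) himage)
  exact hT'.of_local_left_inverse hcont hT'0 (eventually_of_mem (hU.mem_nhds ht) hTA)

section FirstOrderCondition

variable {δ : ℝ} {A : ℝ → ℝ}

lemma hasDerivAt_of_focTime_eq (hδ : 1 / 2 < δ) (hA : MapsTo A (Ioi 0) (Ioi 0))
    (hfoc : ∀ t ∈ Ioi 0, focTime δ (A t) = t) {t : ℝ} (ht : 0 < t) :
    HasDerivAt A (-A t / (8 * stdTail (A t) + 2 * t)) t := by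
  have ha : 0 < A t := hA ht
  have hden : 0 < 8 * stdTail (A t) + 2 * t := by linarith [stdTail_pos (A t)]
  have hT' := hasDerivAt_focTime δ ha.ne'
  rw [hfoc t ht] at hT'
  refine (hasDerivAt_of_strictAntiOn_of_rightInverse isOpen_Ioi isOpen_Ioi
    (focTime_strictAntiOn hδ) (fun a ha => focTime_pos hδ ha) hA hfoc ht hT'
    (div_ne_zero (neg_ne_zero.2 hden.ne') ha.ne')).congr_deriv ?_
  rw [inv_div, div_neg, neg_div]

/-- Envelope theorem; the function is the optimal value `s ↦ Fobj δ s (2 / A s)`. -/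
lemma hasDerivAt_optimalValue (hδ : 1 / 2 < δ) (hA : MapsTo A (Ioi 0) (Ioi 0))
    (hfoc : ∀ t ∈ Ioi 0, focTime δ (A t) = t) {t : ℝ} (ht : 0 < t) :
    HasDerivAt (fun s => s * A s / 2 - 2 * stdExcess (A s)) (A t / 4) t := by
  have hA' := hasDerivAt_of_focTime_eq hδ hA hfoc ht
  have hden : 8 * stdTail (A t) + 2 * t ≠ 0 := by linarith [stdTail_pos (A t)]
  refine ((((hasDerivAt_id t).mul hA').div_const 2).sub
    (((hasDerivAt_stdExcess (A t)).comp t hA').const_mul 2)).congr_deriv ?_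
  simp only [id]
  linear_combination (-(A t / 4)) * mul_inv_cancel₀ hden

lemma deriv_deriv_eq_of_focTime (hδ : 1 / 2 < δ) (hA : MapsTo A (Ioi 0) (Ioi 0))
    (hfoc : ∀ t ∈ Ioi 0, focTime δ (A t) = t) {R : ℝ → ℝ}
    (hR : ∀ t ∈ Ioi 0, R t = (t * A t / 2 - 2 * stdExcess (A t)) ^ 2 / 2) {t : ℝ}
    (ht : 0 < t) :
    deriv (deriv R) t = A t * stdPDF (A t) / (2 * (8 * stdTail (A t) + 2 * t)) := by
  have hR' : ∀ s ∈ Ioi (0 : ℝ), HasDerivAt R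
      ((s * A s / 2 - 2 * stdExcess (A s)) * (A s / 4)) s := fun s hs =>
    ((((hasDerivAt_optimalValue hδ hA hfoc hs).pow 2).div_const 2).congr_of_eventuallyEq
      (eventually_of_mem (Ioi_mem_nhds hs) hR)).congr_deriv (by ring)
  have hderiv : deriv R =ᶠ[𝓝 t] fun s => (s * A s / 2 - 2 * stdExcess (A s)) * (A s / 4) :=
    eventually_of_mem (Ioi_mem_nhds ht) fun s hs => (hR' s hs).deriv
  have hderiv' : HasDerivAt (fun s => (s * A s / 2 - 2 * stdExcess (A s)) * (A s / 4))
      (A t / 4 * (A t / 4) + (t * A t / 2 - 2 * stdExcess (A t))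
        * (-A t / (8 * stdTail (A t) + 2 * t) / 4)) t :=
    (hasDerivAt_optimalValue hδ hA hfoc ht).mul
      ((hasDerivAt_of_focTime_eq hδ hA hfoc ht).div_const 4)
  have hden : 8 * stdTail (A t) + 2 * t ≠ 0 := by linarith [stdTail_pos (A t)]
  rw [hderiv.deriv_eq, hderiv'.deriv, stdExcess_eq, mul_comm 2 (8 * _ + _), ← div_div]
  linear_combination (-(A t ^ 2 / 16)) * mul_inv_cancel₀ hden

end FirstOrderCondition

lemma mul_stdPDF_div_le {c δ t a : ℝ} (ht : 0 < t) (ha : 0 ≤ a) (hlow : 4 * c ≤ t * a ^ 2)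
    (hup : t * a ^ 2 ≤ 4 * δ) :
    a * stdPDF a / (4 * t) ≤ √(δ / (8 * π)) * exp (-(2 * c) / t) * t ^ (-(3 : ℝ) / 2) := by
  have hst : 0 < √t := sqrt_pos.2 ht
  have ha_le : a ≤ 2 * √δ / √t := by
    have hδ : 0 ≤ δ := by nlinarith [mul_nonneg ht.le (sq_nonneg a)]
    have h := sqrt_le_sqrt hup
    rw [sqrt_mul ht.le, sqrt_sq ha, sqrt_mul' _ hδ,
      show √4 = 2 by rw [show (4 : ℝ) = 2 ^ 2 by norm_num, sqrt_sq zero_le_two]] at h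
    rw [le_div_iff₀ hst]
    linarith
  have hφ : stdPDF a ≤ exp (-(2 * c) / t) / √(2 * π) := by
    refine div_le_div_of_nonneg_right (exp_le_exp.2 ?_) (sqrt_nonneg _)
    rw [neg_div, neg_div, neg_le_neg_iff, div_le_div_iff₀ ht two_pos]
    linarith
  have hrpow : t ^ (-(3 : ℝ) / 2) = 1 / (t * √t) := by
    rw [show (-(3 : ℝ) / 2) = -(1 + 1 / 2) by norm_num, rpow_neg ht.le, rpow_add ht, rpow_one,
      ← sqrt_eq_rpow, one_div]
  have hsqrt : √(δ / (8 * π)) = √δ / (2 * √(2 * π)) := by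
    rw [sqrt_div' _ (by positivity), show 8 * π = 2 ^ 2 * (2 * π) by ring,
      sqrt_mul (by positivity), sqrt_sq zero_le_two]
  calc a * stdPDF a / (4 * t)
      ≤ 2 * √δ / √t * (exp (-(2 * c) / t) / √(2 * π)) / (4 * t) := by
        gcongr
        exact (stdPDF_pos a).le
    _ = √(δ / (8 * π)) * exp (-(2 * c) / t) * t ^ (-(3 : ℝ) / 2) := by
        rw [hrpow, hsqrt]
        field_simp
        ring

lemma mul_stdPDF_div_le_of_focTime {δ a t : ℝ} (hδ : 1 / 2 < δ) (ha : 0 < a)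
    (h : focTime δ a = t) :
    a * stdPDF a / (2 * (8 * stdTail a + 2 * t))
      ≤ √(δ / (8 * π)) * exp (-(2 * (δ - 1 / 2)) / t) * t ^ (-(3 : ℝ) / 2) := by
  have ht : 0 < t := h ▸ focTime_pos hδ ha
  have hfoc : t * a ^ 2 = 4 * (δ - 1 / 2 + psi a) := by
    rw [← h, focTime]
    field_simp
  have hψ_pos := psi_pos ha.le
  have hψ_le := psi_le_half ha.le
  calc a * stdPDF a / (2 * (8 * stdTail a + 2 * t)) ≤ a * stdPDF a / (4 * t) :=
        div_le_div_of_nonneg_left (mul_pos ha (stdPDF_pos a)).le (by positivity)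
          (by linarith [stdTail_pos a])
    _ ≤ _ := mul_stdPDF_div_le ht ha.le (by linarith) (by linarith)

lemma rpow_three_halves_le_exp {y : ℝ} (hy : 0 ≤ y) : y ^ (3 / 2 : ℝ) ≤ exp y := by
  rw [show (3 / 2 : ℝ) = 1 + 1 / 2 by norm_num, rpow_add' hy (by norm_num), rpow_one,
    ← sqrt_eq_rpow]
  have hamgm : y * √y ≤ (y + y ^ 2) / 2 := by
    nlinarith [sq_sqrt hy, mul_nonneg hy (sq_nonneg (√y - 1))]
  linarith [quadratic_le_exp_of_nonneg hy]

lemma exp_neg_div_mul_rpow_le {c t : ℝ} (hc : 0 < c) (ht : 0 < t) :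
    exp (-c / t) * t ^ (-(3 : ℝ) / 2) ≤ (c ^ (3 / 2 : ℝ))⁻¹ := by
  have h := rpow_three_halves_le_exp (div_pos hc ht).le
  rw [div_rpow hc.le ht.le, div_le_iff₀ (by positivity)] at h
  rw [neg_div, exp_neg, show (-(3 : ℝ) / 2) = -(3 / 2) by norm_num, rpow_neg ht.le, ← mul_inv,
    inv_le_inv₀ (by positivity) (by positivity)]
  exact h

theorem R_second_deriv_bound (δ : ℝ) (hδ : 1 / 2 < δ) (τmin f R : ℝ → ℝ)
    (hτ : ∀ t : ℝ, 0 < t → τmin t ∈ Set.Ioi (0 : ℝ) ∧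
      IsMinOn (Fobj δ t) (Set.Ioi (0 : ℝ)) (τmin t))
    (hf : ∀ t : ℝ, 0 < t → f t = Fobj δ t (τmin t))
    (hR : ∀ t : ℝ, R t = f t ^ 2 / 2) :
    (∀ t : ℝ, 0 < t →
      deriv (deriv R) t
        ≤ Real.sqrt (δ / (8 * Real.pi)) * Real.exp (-(2 * (δ - 1 / 2)) / t)
            * t ^ (-(3 : ℝ) / 2)) ∧
    ∃ C : ℝ, ∀ t : ℝ, 0 < t → deriv (deriv R) t ≤ C := by
  set A : ℝ → ℝ := fun t => 2 / τmin t with hA_def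
  have hA : MapsTo A (Ioi 0) (Ioi 0) := fun t ht => mem_Ioi.2 (div_pos two_pos (hτ t ht).1)
  have hfoc : ∀ t ∈ Ioi (0 : ℝ), focTime δ (A t) = t := fun t ht =>
    focTime_two_div_of_isMinOn (hτ t ht).1 (hτ t ht).2
  have hRA : ∀ t ∈ Ioi (0 : ℝ), R t = (t * A t / 2 - 2 * stdExcess (A t)) ^ 2 / 2 :=
    fun t ht => by
    rw [hR, hf t ht, ← Fobj_two_div_of_focTime (hA ht).ne' (hfoc t ht), hA_def,
      div_div_cancel₀ two_ne_zero]
  have hbound : ∀ t : ℝ, 0 < t → deriv (deriv R) t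
      ≤ √(δ / (8 * π)) * exp (-(2 * (δ - 1 / 2)) / t) * t ^ (-(3 : ℝ) / 2) :=
    fun t ht => by
    rw [deriv_deriv_eq_of_focTime hδ hA hfoc hRA ht]
    exact mul_stdPDF_div_le_of_focTime hδ (hA ht) (hfoc t ht)
  refine ⟨hbound, √(δ / (8 * π)) * ((2 * (δ - 1 / 2)) ^ (3 / 2 : ℝ))⁻¹, fun t ht =>
    (hbound t ht).trans ?_⟩
  rw [mul_assoc]
  exact mul_le_mul_of_nonneg_left (exp_neg_div_mul_rpow_le (by linarith) ht) (sqrt_nonneg _)
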